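/- arXiv:1007.4238 — 2 statements merged into one kernel-verified Lean document; each statement's English description precedes it below -/
import Mathlib

section
/- Let X be an ergodic Banach space, let π be an action of ℍ on X by linear isometric automorphisms, and let f : ℍ → X be a 1-cocycle for π that is Lipschitz with respect to d_W. Then lim_{N→∞} ‖f(c^{N²})‖ / N = 0, where c = aba⁻¹b⁻¹; consequently liminf_{t→∞} ω_f(t)/t = 0. -/
/-!
By ergodicity the averages `f(aⁿ)/n` and `f(bⁿ)/n` converge to vectors `w_a`, `w_b`. Conjugating
`a` by `bⁿ` (or `b` by `aⁿ`) multiplies it by the central element `c^{±n}`, whose word length is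
`O(√n)`; as `f` is Lipschitz this perturbation is sublinear, which forces `w_a` and `w_b` to be
invariant under `π(a)` and `π(b)`, hence under all of `ℍ`. The cocycle identity for the
commutator `c^{N²} = [a^N, b^N]` then bounds `‖f(c^{N²})‖` by
`2‖f(a^N) - N w_a‖ + 2‖f(b^N) - N w_b‖ = o(N)`, and since `d_W(1, c^{N²}) ≥ N` this gives
`ω_f(t) = o(t)`.
-/

open scoped BigOperators

/-- The discrete Heisenberg group `ℍ`, realized via the coordinates of the
3×3 upper-triangular integer matrices `[[1, x, z], [0, 1, y], [0, 0, 1]]`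
with unit diagonal. -/
@[ext] structure Heis where
  x : ℤ
  y : ℤ
  z : ℤ

namespace Heis

instance : One Heis := ⟨⟨0, 0, 0⟩⟩
instance : Mul Heis := ⟨fun g h => ⟨g.x + h.x, g.y + h.y, g.z + h.z + g.x * h.y⟩⟩
instance : Inv Heis := ⟨fun g => ⟨-g.x, -g.y, -g.z + g.x * g.y⟩⟩

@[simp] lemma mul_def (g h : Heis) :
    g * h = ⟨g.x + h.x, g.y + h.y, g.z + h.z + g.x * h.y⟩ := rfl
@[simp] lemma one_def : (1 : Heis) = ⟨0, 0, 0⟩ := rfl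
@[simp] lemma inv_def (g : Heis) : g⁻¹ = ⟨-g.x, -g.y, -g.z + g.x * g.y⟩ := rfl

instance : Group Heis where
  mul_assoc g h k := by ext <;> simp <;> ring
  one_mul g := by ext <;> simp
  mul_one g := by ext <;> simp
  inv_mul_cancel g := by ext <;> simp <;> ring

/-- The generator `a`. -/
def A : Heis := ⟨1, 0, 0⟩
/-- The generator `b`. -/
def B : Heis := ⟨0, 1, 0⟩
/-- The commutator `c = a * b * a⁻¹ * b⁻¹`, a central element. -/
def C : Heis := A * B * A⁻¹ * B⁻¹
/-- The symmetric generating set `S = {a, b, a⁻¹, b⁻¹}`. -/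
def S : Set Heis := {A, B, A⁻¹, B⁻¹}

/-- The word length of `g` with respect to the generating set `S`. -/
noncomputable def wordLength (g : Heis) : ℕ :=
  sInf {n : ℕ | ∃ l : List Heis, l.length = n ∧ (∀ s ∈ l, s ∈ S) ∧ l.prod = g}

/-- The left-invariant word metric `d_W` on `ℍ` associated to `S`. -/
noncomputable def dW (g h : Heis) : ℕ := wordLength (g⁻¹ * h)

end Heis

/-- The compression rate `ω_f(t) = inf { ‖f x − f y‖ : d_W(x,y) ≥ t }` of `f : ℍ → X`. -/
noncomputable def omegaComp {X : Type*} [NormedAddCommGroup X] (f : Heis → X) (t : ℝ) : ℝ :=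
  sInf {r : ℝ | ∃ g h : Heis, t ≤ (Heis.dW g h : ℝ) ∧ r = ‖f g - f h‖}

/-- A Banach space `X` is ergodic if for every linear isometry `T : X → X` and every
`x ∈ X` the sequence of ergodic averages `(1/n)·∑_{j=0}^{n−1} T^j x` converges in norm. -/
def IsErgodicSpace (X : Type*) [NormedAddCommGroup X] [NormedSpace ℝ X] : Prop :=
  ∀ T : X →ₗᵢ[ℝ] X, ∀ v : X, ∃ w : X,
    Filter.Tendsto (fun n : ℕ => (n : ℝ)⁻¹ • ∑ j ∈ Finset.range n, (⇑T)^[j] v)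
      Filter.atTop (nhds w)

open Filter Topology
open scoped commutatorElement

theorem LinearIsometryEquiv.mul_apply {R E : Type*} [Semiring R] [SeminormedAddCommGroup E]
    [Module R E] (e e' : E ≃ₗᵢ[R] E) (x : E) : (e * e') x = e (e' x) :=
  rfl

section Cocycle

variable {G X : Type*} [Group G] [NormedAddCommGroup X] [NormedSpace ℝ X]

def IsCocycle (π : G →* (X ≃ₗᵢ[ℝ] X)) (f : G → X) : Prop :=
  ∀ g h : G, f (g * h) = π g (f h) + f g

namespace IsCocycle

variable {π : G →* (X ≃ₗᵢ[ℝ] X)} {f : G → X}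

theorem apply_one (hf : IsCocycle π f) : f 1 = 0 := by
  simpa using hf 1 1

theorem apply_inv (hf : IsCocycle π f) (g : G) : f g⁻¹ = -π g⁻¹ (f g) := by
  have h := hf g⁻¹ g
  rw [inv_mul_cancel, hf.apply_one] at h
  exact eq_neg_of_add_eq_zero_right h.symm

theorem apply_pow (hf : IsCocycle π f) (g : G) (n : ℕ) :
    f (g ^ n) = ∑ j ∈ Finset.range n, π (g ^ j) (f g) := by
  induction n with
  | zero => simp [hf.apply_one]
  | succ n ih => rw [pow_succ, hf, ih, Finset.sum_range_succ, add_comm]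

theorem apply_commutatorElement (hf : IsCocycle π f) (u v : G) :
    f ⁅u, v⁆ = f u + π u (f v) - π (u * v * u⁻¹) (f u) - π ⁅u, v⁆ (f v) := by
  rw [commutatorElement_def, hf, hf (u * v), hf u, hf.apply_inv, hf.apply_inv, map_neg, map_neg,
    ← LinearIsometryEquiv.mul_apply, ← LinearIsometryEquiv.mul_apply, ← map_mul, ← map_mul]
  abel

theorem norm_apply_commutatorElement_le (hf : IsCocycle π f) {w w' : X}
    (hw : ∀ g, π g w = w) (hw' : ∀ g, π g w' = w') (u v : G) :
    ‖f ⁅u, v⁆‖ ≤ 2 * ‖f u - w‖ + 2 * ‖f v - w'‖ := by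
  have key : f ⁅u, v⁆ = (f u - w) + π u (f v - w') - π (u * v * u⁻¹) (f u - w)
      - π ⁅u, v⁆ (f v - w') := by
    simp only [map_sub, hw, hw', hf.apply_commutatorElement]
    abel
  set x := f u - w
  set y := f v - w'
  have h₁ := norm_sub_le (x + π u y - π (u * v * u⁻¹) x) (π ⁅u, v⁆ y)
  have h₂ := norm_sub_le (x + π u y) (π (u * v * u⁻¹) x)
  have h₃ := norm_add_le x (π u y)
  simp only [LinearIsometryEquiv.norm_map] at h₁ h₂ h₃
  rw [key]
  linarith

theorem exists_tendsto_inv_smul_apply_pow (hX : IsErgodicSpace X) (hf : IsCocycle π f)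
    (g : G) :
    ∃ w, Tendsto (fun n : ℕ => (n : ℝ)⁻¹ • f (g ^ n)) atTop (𝓝 w) := by
  have hiter (j : ℕ) : (⇑(π g).toLinearIsometry)^[j] (f g) = π (g ^ j) (f g) := by
    induction j with
    | zero => simp
    | succ j ih => rw [Function.iterate_succ_apply', ih, pow_succ', map_mul]; rfl
  obtain ⟨w, hw⟩ := hX (π g).toLinearIsometry (f g)
  exact ⟨w, hw.congr fun n => by simp only [hiter, hf.apply_pow]⟩

theorem apply_eq_of_tendsto (hf : IsCocycle π f) {g h : G} {w : X}
    (hw : Tendsto (fun n : ℕ => (n : ℝ)⁻¹ • f (g ^ n)) atTop (𝓝 w))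
    (hconj : Tendsto (fun n : ℕ => ‖f ((g ^ n)⁻¹ * h * g ^ n)‖ / n) atTop (𝓝 0)) :
    π h w = w := by
  have hlim : Tendsto (fun n : ℕ => π h ((n : ℝ)⁻¹ • f (g ^ n)) - (n : ℝ)⁻¹ • f (g ^ n))
      atTop (𝓝 (π h w - w)) := (((π h).continuous.tendsto w).comp hw).sub hw
  have hmove : ∀ n : ℕ, π h ((n : ℝ)⁻¹ • f (g ^ n)) - (n : ℝ)⁻¹ • f (g ^ n) =
      (n : ℝ)⁻¹ • (π (g ^ n) (f ((g ^ n)⁻¹ * h * g ^ n)) - f h) := by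
    intro n
    have h₁ := hf h (g ^ n)
    rw [show h * g ^ n = g ^ n * ((g ^ n)⁻¹ * h * g ^ n) by group, hf] at h₁
    rw [map_smul, ← smul_sub, eq_sub_of_add_eq h₁.symm]
    congr 1
    abel
  have hzero : Tendsto (fun n : ℕ => π h ((n : ℝ)⁻¹ • f (g ^ n)) - (n : ℝ)⁻¹ • f (g ^ n))
      atTop (𝓝 0) := by
    refine squeeze_zero_norm (fun n => ?_)
      (by simpa using hconj.add (tendsto_const_div_atTop_nhds_zero_nat ‖f h‖))
    rw [hmove, norm_smul, norm_inv, Real.norm_natCast, inv_mul_eq_div, ← add_div,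
      ← LinearIsometryEquiv.norm_map (π (g ^ n)) (f ((g ^ n)⁻¹ * h * g ^ n))]
    exact div_le_div_of_nonneg_right (norm_sub_le _ _) n.cast_nonneg
  exact sub_eq_zero.1 (tendsto_nhds_unique hlim hzero)

end IsCocycle

theorem MonoidHom.apply_eq_of_closure_eq_top {π : G →* (X ≃ₗᵢ[ℝ] X)} {s : Set G}
    (hs : Subgroup.closure s = ⊤) {w : X} (hw : ∀ g ∈ s, π g w = w) (g : G) : π g w = w := by
  have hg : g ∈ Subgroup.closure s := hs ▸ Subgroup.mem_top g
  induction hg using Subgroup.closure_induction with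
  | mem g hg => exact hw g hg
  | one => simp
  | mul g h _ _ hg hh => rw [map_mul, LinearIsometryEquiv.coe_mul, Function.comp_apply, hh, hg]
  | inv g _ hg => rw [map_inv, LinearIsometryEquiv.coe_inv, LinearIsometryEquiv.symm_apply_eq, hg]

end Cocycle

theorem tendsto_nat_sqrt_div_atTop : Tendsto (fun n : ℕ => (Nat.sqrt n : ℝ) / n) atTop (𝓝 0) := by
  have h : Tendsto (fun x : ℝ => √x / x) atTop (𝓝 0) := by
    simp_rw [Real.sqrt_div_self]
    exact tendsto_inv_atTop_zero.comp Real.tendsto_sqrt_atTop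
  exact squeeze_zero (fun n => by positivity)
    (fun n => div_le_div_of_nonneg_right Real.nat_sqrt_le_real_sqrt n.cast_nonneg)
    (h.comp tendsto_natCast_atTop_atTop)

theorem tendsto_div_atTop_of_le_natCeil {ω : ℝ → ℝ} {φ : ℕ → ℝ} (h0 : ∀ t, 0 ≤ ω t)
    (hle : ∀ t, ω t ≤ φ ⌈t⌉₊) (hφ : Tendsto (fun N : ℕ => φ N / N) atTop (𝓝 0)) :
    Tendsto (fun t => ω t / t) atTop (𝓝 0) := by
  have h : Tendsto (fun t : ℝ => φ ⌈t⌉₊ / ⌈t⌉₊ * (⌈t⌉₊ / t)) atTop (𝓝 0) := by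
    simpa using (hφ.comp tendsto_nat_ceil_atTop).mul tendsto_nat_ceil_div_atTop
  refine squeeze_zero' ?_ ?_ h
  · filter_upwards [eventually_ge_atTop 0] with t ht using div_nonneg (h0 t) ht
  · filter_upwards [eventually_gt_atTop 0] with t ht
    rw [div_mul_div_cancel₀ (by positivity)]
    exact div_le_div_of_nonneg_right (hle t) ht.le

namespace Heis

theorem A_zpow (n : ℤ) : A ^ n = ⟨n, 0, 0⟩ := by
  induction n using Int.induction_on with
  | zero => rfl
  | succ n ih => rw [zpow_add_one, ih]; ext <;> simp [A]
  | pred n ih => rw [zpow_sub_one, ih]; ext <;> simp [A, sub_eq_add_neg]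

theorem B_zpow (n : ℤ) : B ^ n = ⟨0, n, 0⟩ := by
  induction n using Int.induction_on with
  | zero => rfl
  | succ n ih => rw [zpow_add_one, ih]; ext <;> simp [B]
  | pred n ih => rw [zpow_sub_one, ih]; ext <;> simp [B, sub_eq_add_neg]

theorem C_zpow (n : ℤ) : C ^ n = ⟨0, 0, n⟩ := by
  induction n using Int.induction_on with
  | zero => rfl
  | succ n ih => rw [zpow_add_one, ih]; ext <;> simp [C, A, B]
  | pred n ih => rw [zpow_sub_one, ih]; ext <;> simp [C, A, B, sub_eq_add_neg]

theorem A_pow (n : ℕ) : A ^ n = ⟨n, 0, 0⟩ := by rw [← zpow_natCast, A_zpow]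

theorem B_pow (n : ℕ) : B ^ n = ⟨0, n, 0⟩ := by rw [← zpow_natCast, B_zpow]

theorem C_pow (n : ℕ) : C ^ n = ⟨0, 0, n⟩ := by rw [← zpow_natCast, C_zpow]

theorem closure_A_B : Subgroup.closure {A, B} = ⊤ := by
  refine eq_top_iff.2 fun g _ => ?_
  have hA : A ∈ Subgroup.closure {A, B} := Subgroup.subset_closure (by simp)
  have hB : B ∈ Subgroup.closure {A, B} := Subgroup.subset_closure (by simp)
  have hC : C ∈ Subgroup.closure {A, B} :=
    mul_mem (mul_mem (mul_mem hA hB) (inv_mem hA)) (inv_mem hB)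
  have hg : g = A ^ g.x * B ^ g.y * C ^ (g.z - g.x * g.y) := by
    rw [A_zpow, B_zpow, C_zpow]; ext <;> simp
  rw [hg]
  exact mul_mem (mul_mem (zpow_mem hA _) (zpow_mem hB _)) (zpow_mem hC _)

theorem commutatorElement_A_pow_B_pow (n : ℕ) : ⁅A ^ n, B ^ n⁆ = C ^ (n ^ 2) := by
  rw [commutatorElement_def, A_pow, B_pow, C_pow]; ext <;> simp; ring

theorem inv_mem_S {s : Heis} (hs : s ∈ S) : s⁻¹ ∈ S := by
  rcases hs with rfl | rfl | rfl | rfl <;> simp [S]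

theorem exists_list_prod_eq (g : Heis) : ∃ l : List Heis, (∀ s ∈ l, s ∈ S) ∧ l.prod = g := by
  have hS : Subgroup.closure S = ⊤ :=
    eq_top_iff.2 (closure_A_B ▸ Subgroup.closure_mono (by simp [S, Set.insert_subset_iff]))
  have hg : g ∈ Submonoid.closure (S ∪ S⁻¹) := by
    rw [← Subgroup.closure_toSubmonoid, hS]; trivial
  obtain ⟨l, hl, rfl⟩ := Submonoid.exists_list_of_mem_closure hg
  refine ⟨l, fun s hs => ?_, rfl⟩
  rcases hl s hs with h | h
  exacts [h, inv_inv s ▸ inv_mem_S h]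

theorem abs_x_le_one_of_mem_S {s : Heis} (hs : s ∈ S) : |s.x| ≤ 1 := by
  rcases hs with rfl | rfl | rfl | rfl <;> simp [A, B]

theorem abs_y_le_one_of_mem_S {s : Heis} (hs : s ∈ S) : |s.y| ≤ 1 := by
  rcases hs with rfl | rfl | rfl | rfl <;> simp [A, B]

theorem z_eq_zero_of_mem_S {s : Heis} (hs : s ∈ S) : s.z = 0 := by
  rcases hs with rfl | rfl | rfl | rfl <;> simp [A, B]

theorem abs_prod_y_le_length {l : List Heis} (hl : ∀ s ∈ l, s ∈ S) :
    |l.prod.y| ≤ l.length := by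
  induction l with
  | nil => simp
  | cons s l ih =>
    simp only [List.forall_mem_cons] at hl
    rw [List.prod_cons, mul_def, List.length_cons, Nat.cast_succ]
    linarith [abs_add_le s.y l.prod.y, abs_y_le_one_of_mem_S hl.1, ih hl.2]

theorem abs_prod_z_le_length_sq {l : List Heis} (hl : ∀ s ∈ l, s ∈ S) :
    |l.prod.z| ≤ (l.length : ℤ) ^ 2 := by
  induction l with
  | nil => simp
  | cons s l ih =>
    simp only [List.forall_mem_cons] at hl
    rw [List.prod_cons, mul_def, List.length_cons, Nat.cast_succ, z_eq_zero_of_mem_S hl.1,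
      zero_add]
    have hxy : |s.x * l.prod.y| ≤ l.length := by
      rw [abs_mul]
      nlinarith [abs_x_le_one_of_mem_S hl.1, abs_prod_y_le_length hl.2, abs_nonneg s.x,
        abs_nonneg l.prod.y]
    nlinarith [abs_add_le l.prod.z (s.x * l.prod.y), ih hl.2]

theorem wordLength_le_length {l : List Heis} (hl : ∀ s ∈ l, s ∈ S) :
    wordLength l.prod ≤ l.length :=
  Nat.sInf_le ⟨l, rfl, hl, rfl⟩

-- `wordLength` is an `sInf`, attained only because every element is a word in `S`.
theorem exists_length_eq_wordLength (g : Heis) :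
    ∃ l : List Heis, (∀ s ∈ l, s ∈ S) ∧ l.prod = g ∧ l.length = wordLength g := by
  obtain ⟨l, hl, hg⟩ := exists_list_prod_eq g
  obtain ⟨l', hlen, hl', hg'⟩ : wordLength g ∈
      {n | ∃ l : List Heis, l.length = n ∧ (∀ s ∈ l, s ∈ S) ∧ l.prod = g} :=
    Nat.sInf_mem ⟨l.length, l, rfl, hl, hg⟩
  exact ⟨l', hl', hg', hlen⟩

theorem wordLength_mul_le (g h : Heis) : wordLength (g * h) ≤ wordLength g + wordLength h := by
  obtain ⟨l, hl, rfl, hlen⟩ := exists_length_eq_wordLength g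
  obtain ⟨l', hl', rfl, hlen'⟩ := exists_length_eq_wordLength h
  rw [← hlen, ← hlen', ← List.length_append, ← List.prod_append]
  exact wordLength_le_length fun s hs => (List.mem_append.1 hs).elim (hl s) (hl' s)

theorem wordLength_inv_le (g : Heis) : wordLength g⁻¹ ≤ wordLength g := by
  obtain ⟨l, hl, rfl, hlen⟩ := exists_length_eq_wordLength g
  rw [← hlen, List.prod_inv_reverse]
  simpa using wordLength_le_length (l := (l.map (·⁻¹)).reverse)
    (by simpa using fun s hs => inv_mem_S (hl s hs))

theorem wordLength_pow_le (g : Heis) (n : ℕ) : wordLength (g ^ n) ≤ n * wordLength g := by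
  induction n with
  | zero => simpa using wordLength_le_length (l := []) (by simp)
  | succ n ih =>
    rw [pow_succ, Nat.succ_mul]
    exact (wordLength_mul_le _ _).trans (Nat.add_le_add_right ih _)

theorem wordLength_le_one_of_mem_S {s : Heis} (hs : s ∈ S) : wordLength s ≤ 1 := by
  simpa using wordLength_le_length (l := [s]) (by simpa using hs)

theorem wordLength_A_le : wordLength A ≤ 1 := wordLength_le_one_of_mem_S (by simp [S])

theorem wordLength_B_le : wordLength B ≤ 1 := wordLength_le_one_of_mem_S (by simp [S])

theorem wordLength_commutatorElement_le (g h : Heis) :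
    wordLength ⁅g, h⁆ ≤ 2 * wordLength g + 2 * wordLength h := by
  have h₁ := wordLength_mul_le (g * h * g⁻¹) h⁻¹
  have h₂ := wordLength_mul_le (g * h) g⁻¹
  have h₃ := wordLength_mul_le g h
  have h₄ := wordLength_inv_le g
  have h₅ := wordLength_inv_le h
  rw [commutatorElement_def]
  omega

theorem wordLength_C_le : wordLength C ≤ 4 :=
  (wordLength_commutatorElement_le A B).trans <| by
    linarith [wordLength_A_le, wordLength_B_le]

theorem wordLength_C_pow_le (n : ℕ) : wordLength (C ^ n) ≤ 12 * Nat.sqrt n := by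
  set k := Nat.sqrt n
  have hn : n = k ^ 2 + (n - k ^ 2) := (Nat.add_sub_cancel' (Nat.sqrt_le' n)).symm
  have hr : n - k ^ 2 ≤ 2 * k := by
    have := Nat.lt_succ_sqrt' n
    zify [Nat.sqrt_le' n] at this ⊢
    nlinarith
  have hA := wordLength_pow_le A k
  have hB := wordLength_pow_le B k
  have hA1 := wordLength_A_le
  have hB1 := wordLength_B_le
  calc wordLength (C ^ n) = wordLength (⁅A ^ k, B ^ k⁆ * C ^ (n - k ^ 2)) := by
        rw [commutatorElement_A_pow_B_pow, ← pow_add, ← hn]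
    _ ≤ 2 * wordLength (A ^ k) + 2 * wordLength (B ^ k) + (n - k ^ 2) * wordLength C :=
        (wordLength_mul_le _ _).trans
          (add_le_add (wordLength_commutatorElement_le _ _) (wordLength_pow_le _ _))
    _ ≤ 2 * k + 2 * k + 2 * k * 4 := by gcongr <;> nlinarith [wordLength_C_le]
    _ = 12 * k := by ring

theorem le_wordLength_C_pow_sq (N : ℕ) : N ≤ wordLength (C ^ (N ^ 2)) := by
  obtain ⟨l, hl, hprod, hlen⟩ := exists_length_eq_wordLength (C ^ (N ^ 2))
  have h := abs_prod_z_le_length_sq hl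
  rw [hprod, C_pow, hlen] at h
  have h' : N ^ 2 ≤ wordLength (C ^ (N ^ 2)) ^ 2 := by
    dsimp only at h
    rwa [abs_of_nonneg (by positivity), ← Nat.cast_pow, Nat.cast_le] at h
  exact (Nat.pow_le_pow_iff_left two_ne_zero).1 h'

theorem dW_one_left (g : Heis) : dW 1 g = wordLength g := by
  rw [dW, inv_one, one_mul]

theorem wordLength_conj_pow_le {g h : Heis} (hg : g ∈ ({A, B} : Set Heis))
    (hh : h ∈ ({A, B} : Set Heis)) (n : ℕ) :
    wordLength ((g ^ n)⁻¹ * h * g ^ n) ≤ 1 + 12 * Nat.sqrt n := by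
  have hC := wordLength_C_pow_le n
  have hCinv := wordLength_inv_le (C ^ n)
  have hA := wordLength_A_le
  have hB := wordLength_B_le
  rcases hg with rfl | rfl <;> rcases hh with rfl | rfl
  · rw [show (A ^ n)⁻¹ * A * A ^ n = A by group]; omega
  · rw [show (A ^ n)⁻¹ * B * A ^ n = B * (C ^ n)⁻¹ by rw [A_pow, C_pow]; ext <;> simp [B]]
    have := wordLength_mul_le B (C ^ n)⁻¹; omega
  · rw [show (B ^ n)⁻¹ * A * B ^ n = A * C ^ n by rw [B_pow, C_pow]; ext <;> simp [A]]
    have := wordLength_mul_le A (C ^ n); omega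
  · rw [show (B ^ n)⁻¹ * B * B ^ n = B by group]; omega

theorem tendsto_wordLength_conj_pow_div {g h : Heis} (hg : g ∈ ({A, B} : Set Heis))
    (hh : h ∈ ({A, B} : Set Heis)) :
    Tendsto (fun n : ℕ => (wordLength ((g ^ n)⁻¹ * h * g ^ n) : ℝ) / n) atTop (𝓝 0) := by
  have hlim : Tendsto (fun n : ℕ => 1 / (n : ℝ) + 12 * ((Nat.sqrt n : ℝ) / n)) atTop (𝓝 0) := by
    simpa using tendsto_one_div_atTop_nhds_zero_nat.add (tendsto_nat_sqrt_div_atTop.const_mul 12)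
  refine squeeze_zero (fun n => by positivity) (fun n => ?_) hlim
  rw [mul_div_assoc', ← add_div]
  exact div_le_div_of_nonneg_right (by exact_mod_cast wordLength_conj_pow_le hg hh n)
    n.cast_nonneg

variable {X : Type*} [NormedAddCommGroup X] [NormedSpace ℝ X] {π : Heis →* (X ≃ₗᵢ[ℝ] X)}
  {f : Heis → X} {L : ℝ}

theorem exists_invariant_tendsto_inv_smul_apply_pow (hX : IsErgodicSpace X)
    (hf : IsCocycle π f) (hL : ∀ g, ‖f g‖ ≤ L * wordLength g) {g : Heis}
    (hg : g ∈ ({A, B} : Set Heis)) :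
    ∃ w, Tendsto (fun n : ℕ => (n : ℝ)⁻¹ • f (g ^ n)) atTop (𝓝 w) ∧ ∀ h, π h w = w := by
  obtain ⟨w, hw⟩ := hf.exists_tendsto_inv_smul_apply_pow hX g
  refine ⟨w, hw, π.apply_eq_of_closure_eq_top closure_A_B fun h hh =>
    hf.apply_eq_of_tendsto hw ?_⟩
  refine squeeze_zero (g := fun n : ℕ => L * ((wordLength ((g ^ n)⁻¹ * h * g ^ n) : ℝ) / n))
    (fun n => by positivity) (fun n => ?_)
    (by simpa only [mul_zero] using (tendsto_wordLength_conj_pow_div hg hh).const_mul L)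
  rw [mul_div_assoc']
  exact div_le_div_of_nonneg_right (hL _) n.cast_nonneg

theorem tendsto_norm_apply_C_pow_sq_div (hX : IsErgodicSpace X) (hf : IsCocycle π f)
    (hL : ∀ g, ‖f g‖ ≤ L * wordLength g) :
    Tendsto (fun N : ℕ => ‖f (C ^ (N ^ 2))‖ / N) atTop (𝓝 0) := by
  obtain ⟨wa, hwa, hwa_inv⟩ := exists_invariant_tendsto_inv_smul_apply_pow hX hf hL
    (g := A) (by simp)
  obtain ⟨wb, hwb, hwb_inv⟩ := exists_invariant_tendsto_inv_smul_apply_pow hX hf hL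
    (g := B) (by simp)
  have hbound (N : ℕ) : ‖f (C ^ (N ^ 2))‖ / N ≤
      2 * ‖(N : ℝ)⁻¹ • f (A ^ N) - wa‖ + 2 * ‖(N : ℝ)⁻¹ • f (B ^ N) - wb‖ := by
    rcases N.eq_zero_or_pos with rfl | hN
    · simp only [CharP.cast_eq_zero, div_zero]
      positivity
    have hscale (x w : X) : ‖x - (N : ℝ) • w‖ = N * ‖(N : ℝ)⁻¹ • x - w‖ := by
      have hx : x - (N : ℝ) • w = (N : ℝ) • ((N : ℝ)⁻¹ • x - w) := by
        rw [smul_sub, smul_inv_smul₀ (by positivity)]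
      rw [hx, norm_smul, Real.norm_natCast]
    have h := hf.norm_apply_commutatorElement_le (w := (N : ℝ) • wa) (w' := (N : ℝ) • wb)
      (fun g => by rw [map_smul, hwa_inv]) (fun g => by rw [map_smul, hwb_inv]) (A ^ N) (B ^ N)
    rw [commutatorElement_A_pow_B_pow, hscale, hscale] at h
    rw [div_le_iff₀ (by positivity)]
    linarith
  refine squeeze_zero (fun _ => by positivity) hbound ?_
  simpa using ((hwa.sub_const wa).norm.const_mul 2).add ((hwb.sub_const wb).norm.const_mul 2)

end Heis

theorem omegaComp_nonneg {X : Type*} [NormedAddCommGroup X] (f : Heis → X) (t : ℝ) :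
    0 ≤ omegaComp f t :=
  Real.sInf_nonneg fun _ ⟨_, _, _, hr⟩ => hr ▸ norm_nonneg _

theorem omegaComp_le {X : Type*} [NormedAddCommGroup X] (f : Heis → X) {t : ℝ} {g h : Heis}
    (hgh : t ≤ Heis.dW g h) : omegaComp f t ≤ ‖f g - f h‖ :=
  csInf_le ⟨0, fun _ ⟨_, _, _, hr⟩ => hr ▸ norm_nonneg _⟩ ⟨g, h, hgh, rfl⟩

theorem heisenberg_cocycle_sublinear_general
    (X : Type*) [NormedAddCommGroup X] [NormedSpace ℝ X]
    (hX : IsErgodicSpace X)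
    (π : Heis →* (X ≃ₗᵢ[ℝ] X))
    (f : Heis → X) (hcocycle : ∀ g h : Heis, f (g * h) = π g (f h) + f g)
    (hLip : ∃ L : ℝ, ∀ g h : Heis, ‖f g - f h‖ ≤ L * (Heis.dW g h : ℝ)) :
    Filter.Tendsto (fun N : ℕ => ‖f (Heis.C ^ (N ^ 2))‖ / (N : ℝ))
      Filter.atTop (nhds 0) ∧
    Filter.liminf (fun t : ℝ => omegaComp f t / t) Filter.atTop = 0 := by
  have hf : IsCocycle π f := hcocycle
  obtain ⟨L, hL⟩ := hLip
  have hnorm (g : Heis) : ‖f g‖ ≤ L * Heis.wordLength g := by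
    simpa only [hf.apply_one, Heis.dW_one_left, zero_sub, norm_neg] using hL 1 g
  have hC := Heis.tendsto_norm_apply_C_pow_sq_div hX hf hnorm
  refine ⟨hC, (tendsto_div_atTop_of_le_natCeil (omegaComp_nonneg f) (fun t => ?_) hC).liminf_eq⟩
  have hdist : t ≤ Heis.dW 1 (Heis.C ^ (⌈t⌉₊ ^ 2)) := by
    rw [Heis.dW_one_left]
    exact (Nat.le_ceil t).trans (by exact_mod_cast Heis.le_wordLength_C_pow_sq _)
  simpa only [hf.apply_one, zero_sub, norm_neg] using omegaComp_le f hdist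

/-- **Section 2.** If `X` is an ergodic Banach space, `π` an action of `ℍ` on `X` by linear
isometric automorphisms and `f : ℍ → X` a Lipschitz `1`-cocycle for `π`, then
`‖f(c^{N²})‖/N → 0`, and consequently `liminf_{t→∞} ω_f(t)/t = 0`. -/
theorem heisenberg_cocycle_sublinear
    (X : Type*) [NormedAddCommGroup X] [NormedSpace ℝ X] [CompleteSpace X]
    (hX : IsErgodicSpace X)
    (π : Heis →* (X ≃ₗᵢ[ℝ] X))
    (f : Heis → X) (hcocycle : ∀ g h : Heis, f (g * h) = π g (f h) + f g)
    (hLip : ∃ L : ℝ, ∀ g h : Heis, ‖f g - f h‖ ≤ L * (Heis.dW g h : ℝ)) :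
    Filter.Tendsto (fun N : ℕ => ‖f (Heis.C ^ (N ^ 2))‖ / (N : ℝ))
      Filter.atTop (nhds 0) ∧
    Filter.liminf (fun t : ℝ => omegaComp f t / t) Filter.atTop = 0 :=
  heisenberg_cocycle_sublinear_general X hX π f hcocycle hLip
end

section
/- Let p ≥ 2, K > 0, and let (X, ‖·‖) be a Banach space satisfying the p-convexity inequality with constant K. Fix z ∈ X and a bounded linear operator T : X → X with ‖T‖ ≤ 1. For each integer n ≥ 0 set s_n := 2^{−n} ∑_{j=0}^{2^n−1} T^j z. Then for every ℓ ∈ ℕ, ∑_{i=0}^{∞} 2^{−ℓ} ∑_{j=0}^{2^ℓ−1} ‖s_{(i+1)ℓ} − T^{j·2^{iℓ}} s_{iℓ}‖^p ≤ (2K)^p ‖z‖^p. -/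
/-!
The averages `s (m + n)` are the barycentres of the `2 ^ m` points `T ^ (j * 2 ^ n) (s n)`, each
of norm at most `‖s n‖`. Averaging the `p`-convexity inequality over the pairs formed by each point
and the barycentre, and bounding the midpoint term from below by Jensen's inequality, bounds the
`p`-th moment of the points about their barycentre by `(2K) ^ p * (‖s n‖ ^ p - ‖s (m + n)‖ ^ p)`.
With `m = ℓ` and `n = i * ℓ` these bounds telescope in `i` to `(2K) ^ p * ‖z‖ ^ p`.
-/

open scoped BigOperators

def PConvex (X : Type*) [NormedAddCommGroup X] [NormedSpace ℝ X] (p K : ℝ) : Prop :=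
  ∀ v w : X, ‖(2:ℝ)⁻¹ • (v + w)‖ ^ p ≤
    (‖v‖ ^ p + ‖w‖ ^ p) / 2 - K ^ (-p) * ‖(2:ℝ)⁻¹ • (v - w)‖ ^ p

open Finset

theorem Finset.sum_range_mul_eq_sum_sum {M : Type*} [AddCommMonoid M] (f : ℕ → M) (a b : ℕ) :
    ∑ t ∈ range (a * b), f t = ∑ j ∈ range a, ∑ r ∈ range b, f (j * b + r) := by
  induction a with
  | zero => simp
  | succ a ih => rw [sum_range_succ, ← ih, add_mul, one_mul, sum_range_add]

theorem ContinuousLinearMap.norm_pow_apply_le_of_norm_le_one {𝕜 E : Type*}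
    [NontriviallyNormedField 𝕜] [SeminormedAddCommGroup E] [NormedSpace 𝕜 E]
    {T : E →L[𝕜] E} (hT : ‖T‖ ≤ 1) (k : ℕ) (x : E) : ‖(T ^ k) x‖ ≤ ‖x‖ := by
  induction k generalizing x with
  | zero => simp
  | succ k ih =>
    rw [pow_succ, mul_apply_eq_comp]
    exact (ih (T x)).trans (T.le_of_opNorm_le hT x |>.trans_eq (one_mul _))

theorem ENNReal.tsum_ofReal_le_of_le_sub_succ {f a : ℕ → ℝ} (hf : ∀ i, 0 ≤ f i)
    (ha : ∀ n, 0 ≤ a n) (h : ∀ i, f i ≤ a i - a (i + 1)) :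
    ∑' i, ENNReal.ofReal (f i) ≤ ENNReal.ofReal (a 0) := by
  refine ENNReal.tsum_le_of_sum_range_le fun n => ?_
  rw [← ENNReal.ofReal_sum_of_nonneg fun i _ => hf i]
  refine ENNReal.ofReal_le_ofReal ?_
  calc ∑ i ∈ range n, f i ≤ ∑ i ∈ range n, (a i - a (i + 1)) := sum_le_sum fun i _ => h i
    _ = a 0 - a n := sum_range_sub' a n
    _ ≤ a 0 := sub_le_self _ (ha n)

theorem norm_sum_smul_rpow_le {ι E : Type*} [SeminormedAddCommGroup E] [NormedSpace ℝ E] {p : ℝ} (hp : 1 ≤ p) {t : Finset ι} {w : ι → ℝ}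
    (hw₀ : ∀ j ∈ t, 0 ≤ w j) (hw₁ : ∑ j ∈ t, w j = 1) (v : ι → E) :
    ‖∑ j ∈ t, w j • v j‖ ^ p ≤ ∑ j ∈ t, w j * ‖v j‖ ^ p := by
  have hnorm : ‖∑ j ∈ t, w j • v j‖ ≤ ∑ j ∈ t, w j * ‖v j‖ :=
    (norm_sum_le _ _).trans_eq <| sum_congr rfl fun j hj => by
      rw [norm_smul, Real.norm_of_nonneg (hw₀ j hj)]
  calc ‖∑ j ∈ t, w j • v j‖ ^ p ≤ (∑ j ∈ t, w j * ‖v j‖) ^ p :=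
        Real.rpow_le_rpow (norm_nonneg _) hnorm (by linarith)
    _ ≤ ∑ j ∈ t, w j * ‖v j‖ ^ p :=
        Real.rpow_arith_mean_le_arith_mean_rpow t w _ hw₀ hw₁ (fun _ _ => norm_nonneg _) hp

namespace PConvex

variable {X : Type*} [NormedAddCommGroup X] [NormedSpace ℝ X] {p K : ℝ}

theorem rpow_norm_midpoint_add_le (hX : PConvex X p K) (hK : 0 < K) (v w : X) :
    ‖(2:ℝ)⁻¹ • (v + w)‖ ^ p + ‖v - w‖ ^ p / (2 * K) ^ p ≤ (‖v‖ ^ p + ‖w‖ ^ p) / 2 := by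
  have hscale : K ^ (-p) * ‖(2:ℝ)⁻¹ • (v - w)‖ ^ p = ‖v - w‖ ^ p / (2 * K) ^ p := by
    rw [norm_smul, Real.mul_rpow (by positivity) (norm_nonneg _), Real.mul_rpow zero_le_two hK.le,
      Real.rpow_neg hK.le, Real.norm_of_nonneg (by norm_num), Real.inv_rpow zero_le_two]
    field_simp
  linarith [hX v w]

variable {ι : Type*} {t : Finset ι} {w : ι → ℝ}

theorem sum_mul_norm_sub_rpow_le (hX : PConvex X p K) (hp : 1 ≤ p) (hK : 0 < K)
    (hw₀ : ∀ j ∈ t, 0 ≤ w j) (hw₁ : ∑ j ∈ t, w j = 1) (x : ι → X) :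
    ∑ j ∈ t, w j * ‖∑ i ∈ t, w i • x i - x j‖ ^ p ≤
      (2 * K) ^ p * (∑ j ∈ t, w j * ‖x j‖ ^ p - ‖∑ i ∈ t, w i • x i‖ ^ p) := by
  set y := ∑ i ∈ t, w i • x i
  -- The midpoints of the pairs `(x j, y)` have barycentre `y` again, so Jensen bounds the
  -- midpoint term of the averaged `p`-convexity inequality from below by `‖y‖ ^ p`.
  have hy : ∑ j ∈ t, w j • (2:ℝ)⁻¹ • (x j + y) = y := by
    simp only [smul_add, Finset.sum_add_distrib, smul_comm _ (2:ℝ)⁻¹, ← Finset.smul_sum,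
      ← Finset.sum_smul, hw₁, one_smul]
    rw [← smul_add, ← two_smul ℝ y, smul_smul]; norm_num
  have hjensen : ‖y‖ ^ p ≤ ∑ j ∈ t, w j * ‖(2:ℝ)⁻¹ • (x j + y)‖ ^ p := by
    conv_lhs => rw [← hy]
    exact norm_sum_smul_rpow_le hp hw₀ hw₁ _
  have haverage : ∑ j ∈ t, w j * ‖(2:ℝ)⁻¹ • (x j + y)‖ ^ p
      + (∑ j ∈ t, w j * ‖y - x j‖ ^ p) / (2 * K) ^ p
      ≤ (∑ j ∈ t, w j * ‖x j‖ ^ p + ‖y‖ ^ p) / 2 := by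
    have := Finset.sum_le_sum fun j hj => mul_le_mul_of_nonneg_left
      (hX.rpow_norm_midpoint_add_le hK (x j) y) (hw₀ j hj)
    simp only [mul_add, mul_div_assoc', add_div, sum_add_distrib, ← sum_div, ← sum_mul, hw₁,
      one_mul] at this
    simp only [norm_sub_rev y]
    linarith
  have hS : 0 ≤ ∑ j ∈ t, w j * ‖y - x j‖ ^ p :=
    Finset.sum_nonneg fun j hj => mul_nonneg (hw₀ j hj) (by positivity)
  have h2K : 0 < (2 * K) ^ p := by positivity
  have hgap : (∑ j ∈ t, w j * ‖y - x j‖ ^ p) / (2 * K) ^ p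
      ≤ (∑ j ∈ t, w j * ‖x j‖ ^ p - ‖y‖ ^ p) / 2 := by linarith
  have hD : 0 ≤ ∑ j ∈ t, w j * ‖x j‖ ^ p - ‖y‖ ^ p := by linarith [div_nonneg hS h2K.le]
  linarith [(div_le_iff₀ h2K).1 hgap, mul_nonneg h2K.le hD]

end PConvex

section DyadicAverage

variable {X : Type*} [NormedAddCommGroup X] [NormedSpace ℝ X] (T : X →L[ℝ] X) (z : X)

noncomputable def dyadicAverage (n : ℕ) : X := ((2 : ℝ) ^ n)⁻¹ • ∑ j ∈ range (2 ^ n), (T ^ j) z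

@[simp]
theorem dyadicAverage_zero : dyadicAverage T z 0 = z := by simp [dyadicAverage]

theorem dyadicAverage_add (m n : ℕ) :
    dyadicAverage T z (m + n) =
      ∑ j ∈ range (2 ^ m), ((2 : ℝ) ^ m)⁻¹ • (T ^ (j * 2 ^ n)) (dyadicAverage T z n) := by
  simp only [dyadicAverage, map_smul, map_sum, pow_add, mul_inv, mul_smul, ← smul_sum]
  simp only [sum_range_mul_eq_sum_sum, pow_add, mul_apply_eq_comp]

variable {T z} {p K : ℝ}

theorem PConvex.dyadicAverage_add_le (hX : PConvex X p K) (hp : 1 ≤ p) (hK : 0 < K)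
    (hT : ‖T‖ ≤ 1) (m n : ℕ) :
    ((2 : ℝ) ^ m)⁻¹ * ∑ j ∈ range (2 ^ m),
        ‖dyadicAverage T z (m + n) - (T ^ (j * 2 ^ n)) (dyadicAverage T z n)‖ ^ p ≤
      (2 * K) ^ p * (‖dyadicAverage T z n‖ ^ p - ‖dyadicAverage T z (m + n)‖ ^ p) := by
  have hw₁ : ∑ _j ∈ range (2 ^ m), ((2 : ℝ) ^ m)⁻¹ = 1 := by simp
  have key := hX.sum_mul_norm_sub_rpow_le hp hK (fun _ _ => by positivity) hw₁
    fun j => (T ^ (j * 2 ^ n)) (dyadicAverage T z n)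
  rw [← dyadicAverage_add] at key
  have hleaves : ∑ j ∈ range (2 ^ m), ((2 : ℝ) ^ m)⁻¹ *
      ‖(T ^ (j * 2 ^ n)) (dyadicAverage T z n)‖ ^ p ≤ ‖dyadicAverage T z n‖ ^ p := by
    calc _ ≤ ∑ j ∈ range (2 ^ m), ((2 : ℝ) ^ m)⁻¹ * ‖dyadicAverage T z n‖ ^ p := by
          gcongr
          exact T.norm_pow_apply_le_of_norm_le_one hT _ _
      _ = ‖dyadicAverage T z n‖ ^ p := by rw [← sum_mul, hw₁, one_mul]
  rw [mul_sum]
  exact key.trans (by gcongr)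

end DyadicAverage

theorem ergodic_averages_pconvex_general
    (X : Type*) [NormedAddCommGroup X] [NormedSpace ℝ X]
    (p K : ℝ) (hp : 2 ≤ p) (hK : 0 < K) (hX : PConvex X p K)
    (z : X) (T : X →L[ℝ] X) (hT : ‖T‖ ≤ 1)
    (s : ℕ → X) (hs : ∀ n : ℕ, s n = ((2 : ℝ) ^ n)⁻¹ • ∑ j ∈ Finset.range (2 ^ n), (T ^ j) z)
    (ℓ : ℕ) :
    (∑' i : ℕ, ENNReal.ofReal
        (((2 : ℝ) ^ ℓ)⁻¹ * ∑ j ∈ Finset.range (2 ^ ℓ),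
          ‖s ((i + 1) * ℓ) - (T ^ (j * 2 ^ (i * ℓ))) (s (i * ℓ))‖ ^ p)) ≤
      ENNReal.ofReal ((2 * K) ^ p * ‖z‖ ^ p) := by
  obtain rfl : s = dyadicAverage T z := funext hs
  have hblock (i : ℕ) : ((2 : ℝ) ^ ℓ)⁻¹ * ∑ j ∈ Finset.range (2 ^ ℓ),
      ‖dyadicAverage T z ((i + 1) * ℓ) - (T ^ (j * 2 ^ (i * ℓ))) (dyadicAverage T z (i * ℓ))‖ ^ p ≤
        (2 * K) ^ p * ‖dyadicAverage T z (i * ℓ)‖ ^ p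
          - (2 * K) ^ p * ‖dyadicAverage T z ((i + 1) * ℓ)‖ ^ p := by
    rw [← mul_sub, show (i + 1) * ℓ = ℓ + i * ℓ by ring]
    exact hX.dyadicAverage_add_le (by linarith) hK hT ℓ (i * ℓ)
  simpa using ENNReal.tsum_ofReal_le_of_le_sub_succ (fun i => by positivity)
    (fun i => by positivity) hblock

/-- **Lemma 3.1 (uniform convexity and ergodic averages).** Let `p ≥ 2`, `K > 0`, and let
`(X, ‖·‖)` satisfy the `p`-convexity inequality with constant `K`. Fix `z ∈ X` and a bounded
operator `T : X → X` with `‖T‖ ≤ 1`, and set `s_n = 2^{−n}·∑_{j<2^n} T^j z`. Then for every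
`ℓ ∈ ℕ`, `∑_{i=0}^∞ 2^{−ℓ}·∑_{j<2^ℓ} ‖s_{(i+1)ℓ} − T^{j·2^{iℓ}} s_{iℓ}‖^p ≤ (2K)^p·‖z‖^p`. -/
theorem ergodic_averages_pconvex
    (X : Type*) [NormedAddCommGroup X] [NormedSpace ℝ X]
    (p K : ℝ) (hp : 2 ≤ p) (hK : 0 < K) (hX : PConvex X p K)
    (z : X) (T : X →L[ℝ] X) (hT : ‖T‖ ≤ 1)
    (s : ℕ → X) (hs : ∀ n : ℕ, s n = ((2 : ℝ) ^ n)⁻¹ • ∑ j ∈ Finset.range (2 ^ n), (T ^ j) z)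
    (ℓ : ℕ) (hℓ : 1 ≤ ℓ) :
    (∑' i : ℕ, ENNReal.ofReal
        (((2 : ℝ) ^ ℓ)⁻¹ * ∑ j ∈ Finset.range (2 ^ ℓ),
          ‖s ((i + 1) * ℓ) - (T ^ (j * 2 ^ (i * ℓ))) (s (i * ℓ))‖ ^ p)) ≤
      ENNReal.ofReal ((2 * K) ^ p * ‖z‖ ^ p) :=
  ergodic_averages_pconvex_general X p K hp hK hX z T hT s hs ℓ
end
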